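/- Let u : ℤ × ℤ → K be never-zero and define w(n,m) = u(n,m)^((-1)^(n+m)). Then u satisfies q²(uũ - 1)(ûũû - 1) = p²(uû - 1)(ũũû - 1) for all n, m if and only if w satisfies Q1(0) with parameters p², q²: p²(w - ŵ)(w̃ - w̃̂) = q²(w - w̃)(ŵ - w̃̂), for all n, m. -/

import Mathlib

/-!
Write `a, b, c, d` for the values of `u` at `(n,m), (n+1,m), (n,m+1), (n+1,m+1)`. On a quad with
`n + m` even the transformed values are `a, b⁻¹, c⁻¹, d`, and clearing the denominators `b c` of
Q1(0) gives the equation for `u` up to an overall sign. On a quad with `n + m` odd they are the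
reciprocals of these, and Q1(0) is invariant under `w ↦ w⁻¹` at all four corners, since
`(x⁻¹ - y⁻¹) = (y - x) / (x y)` rescales both sides by the same factor `(a b c d)⁻¹`.
-/

section

variable {K : Type*} [Field K]

/-- Q1(0) on the quad `w, w₁ = w̃, w₂ = ŵ, w₁₂ = w̃̂` with parameters `α = p²`, `β = q²`. -/
def Q1Zero (α β w w₁ w₂ w₁₂ : K) : Prop :=
  α * (w - w₂) * (w₁ - w₁₂) = β * (w - w₁) * (w₂ - w₁₂)

/-- The equation for `u` on the quad `u, u₁ = ũ, u₂ = û, u₁₂ = ũ̂`, with `α = p²`, `β = q²`. -/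
def QuadEqA (α β u u₁ u₂ u₁₂ : K) : Prop :=
  β * (u * u₁ - 1) * (u₂ * u₁₂ - 1) = α * (u * u₂ - 1) * (u₁ * u₁₂ - 1)

theorem q1Zero_inv_iff {α β a b c d : K} (ha : a ≠ 0) (hb : b ≠ 0) (hc : c ≠ 0) (hd : d ≠ 0) :
    Q1Zero α β a⁻¹ b⁻¹ c⁻¹ d⁻¹ ↔ Q1Zero α β a b c d := by
  unfold Q1Zero
  field_simp
  constructor <;> intro h <;> linear_combination h

theorem quadEqA_iff_q1Zero {α β a b c d : K} (hb : b ≠ 0) (hc : c ≠ 0) :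
    QuadEqA α β a b c d ↔ Q1Zero α β a b⁻¹ c⁻¹ d := by
  unfold QuadEqA Q1Zero
  field_simp
  constructor <;> intro h <;> linear_combination h

end

theorem stmt_19_general {K : Type*} [Field K] (p q : K)
    (u : ℤ → ℤ → K) (hu : ∀ n m : ℤ, u n m ≠ 0) :
    let w : ℤ → ℤ → K := fun n m => if Even (n + m) then u n m else (u n m)⁻¹
    (∀ n m : ℤ,
      q ^ 2 * (u n m * u (n + 1) m - 1) * (u n (m + 1) * u (n + 1) (m + 1) - 1) =
        p ^ 2 * (u n m * u n (m + 1) - 1) * (u (n + 1) m * u (n + 1) (m + 1) - 1))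
    ↔
    (∀ n m : ℤ,
      p ^ 2 * (w n m - w n (m + 1)) * (w (n + 1) m - w (n + 1) (m + 1)) =
        q ^ 2 * (w n m - w (n + 1) m) * (w n (m + 1) - w (n + 1) (m + 1))) := by
  intro w
  refine forall₂_congr fun n m => ?_
  have even₁ : Even (n + 1 + m) ↔ ¬Even (n + m) := by rw [add_right_comm, Int.even_add_one]
  have even₂ : Even (n + (m + 1)) ↔ ¬Even (n + m) := by rw [← add_assoc, Int.even_add_one]
  have even₁₂ : Even (n + 1 + (m + 1)) ↔ Even (n + m) := by
    rw [add_right_comm, ← add_assoc, Int.even_add_one, Int.even_add_one, not_not]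
  change QuadEqA _ _ _ _ _ _ ↔ Q1Zero _ _ (w n m) (w (n + 1) m) (w n (m + 1)) _
  by_cases hnm : Even (n + m)
  · simp only [w, even₁, even₂, even₁₂, hnm, if_true, not_true_eq_false, if_false]
    exact quadEqA_iff_q1Zero (hu _ _) (hu _ _)
  · simp only [w, even₁, even₂, even₁₂, hnm, if_false, not_false_eq_true, if_true]
    rw [quadEqA_iff_q1Zero (hu _ _) (hu _ _),
      ← q1Zero_inv_iff (hu _ _) (inv_ne_zero (hu _ _)) (inv_ne_zero (hu _ _)) (hu _ _), inv_inv,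
      inv_inv]

/-- The point transformation w = u^((-1)^(n+m)) maps the equation
q²(uũ − 1)(û ũ̂ − 1) = p²(uû − 1)(ũ ũ̂ − 1) to Q1(0) with parameters p², q². -/
theorem stmt_19 {K : Type*} [Field K] (p q : K) (hp : p ≠ 0) (hq : q ≠ 0)
    (u : ℤ → ℤ → K) (hu : ∀ n m : ℤ, u n m ≠ 0) :
    let w : ℤ → ℤ → K := fun n m => if Even (n + m) then u n m else (u n m)⁻¹
    (∀ n m : ℤ,
      q ^ 2 * (u n m * u (n + 1) m - 1) * (u n (m + 1) * u (n + 1) (m + 1) - 1) =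
        p ^ 2 * (u n m * u n (m + 1) - 1) * (u (n + 1) m * u (n + 1) (m + 1) - 1))
    ↔
    (∀ n m : ℤ,
      p ^ 2 * (w n m - w n (m + 1)) * (w (n + 1) m - w (n + 1) (m + 1)) =
        q ^ 2 * (w n m - w (n + 1) m) * (w n (m + 1) - w (n + 1) (m + 1))) :=
  stmt_19_general p q u hu
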